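/- arXiv:2003.00283 — 3 statements merged into one kernel-verified Lean document; each statement's English description precedes it below -/
import Mathlib

section
/- For all natural numbers a and b, the following identity of formal power series in ℤ[[q]] holds: (q;q)_∞ · Σ_{k≥0} (−1)^k q^{(3k²+k)/2 + (a+b)k} / ((q;q)_k (q;q)_{k+a} (q;q)_{k+b}) = Σ_{n≥0} (−1)^n q^{n(n+1)/2 + bn} / ((q;q)_n (q;q)_{n+a}). -/
/-!
STATEMENT 1. Work in ℤ[[q]] (`PowerSeries ℤ`, with `q := PowerSeries.X`).
For `n ∈ ℕ`, `(q;q)_n = ∏_{j=1}^n (1 - q^j)`, a unit of ℤ[[q]]; `Ring.inverse`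
yields its inverse.  `(q;q)_∞` is the q-adic limit of `(q;q)_n`: its `d`-th
coefficient is the stable value `coeff d ((q;q)_d)`.  Infinite q-adic sums are
encoded coefficientwise: every family `f : ℕ → ℤ[[q]]` occurring here has the
q-order of `f n` at least `n`, so its q-adic sum is the power series whose
`d`-th coefficient is the (stabilized) finite sum `∑_{k ≤ d} coeff d (f k)`;
this is `SeriesSum f`.

The statement: for all natural numbers `a`, `b`,
`(q;q)_∞ · Σ_{k≥0} (−1)^k q^{(3k²+k)/2 + (a+b)k} / ((q;q)_k (q;q)_{k+a} (q;q)_{k+b})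
   = Σ_{n≥0} (−1)^n q^{n(n+1)/2 + bn} / ((q;q)_n (q;q)_{n+a})` in ℤ[[q]].
-/

noncomputable section
open PowerSeries

/-- `(q;q)_n = ∏_{j=1}^n (1 - q^j)`. -/
def qPoch (n : ℕ) : PowerSeries ℤ :=
  ∏ j ∈ Finset.range n, (1 - (X : PowerSeries ℤ) ^ (j + 1))

/-- `(q;q)_∞`, the q-adic limit of `(q;q)_n`. -/
def qPochInf : PowerSeries ℤ := PowerSeries.mk fun d => coeff d (qPoch d)

/-- The q-adic sum of a family of power series whose `n`-th member has q-order `≥ n`. -/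
def SeriesSum (f : ℕ → PowerSeries ℤ) : PowerSeries ℤ :=
  PowerSeries.mk fun d => ∑ k ∈ Finset.range (d + 1), coeff d (f k)

/-!
Euler's expansion `(q;q)_∞ / (q;q)_m = Σ_j (-1)^j q^{j(j+1)/2 + mj} / (q;q)_j`, which follows
from the functional equation `E_m = (1 - q^{m+1}) E_{m+1}` of the right-hand side, turns each
summand `(q;q)_∞ / (q;q)_{k+b}` on the left into a series in `j`. Regrouping the double sum along
`k + j = n` factors out `(-1)^n q^{n(n+1)/2 + bn}` and leaves the finite Durfee-type identity
`Σ_{k+j=n} q^{k²+ak} / ((q;q)_k (q;q)_{k+a} (q;q)_j) = 1 / ((q;q)_n (q;q)_{n+a})`, proved by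
induction on `n` after splitting `1 - q^{k+j} = (1 - q^j) + q^j (1 - q^k)`.
-/

open Finset

lemma le_mul_succ_div_two (j : ℕ) : j ≤ j * (j + 1) / 2 := by
  rcases Nat.eq_zero_or_pos j with rfl | hj
  · rfl
  · exact (Nat.le_div_iff_mul_le two_pos).mpr (Nat.mul_le_mul_left j (Nat.succ_le_succ hj))

lemma add_mul_add_succ_div_two (k j : ℕ) :
    (k + j) * (k + j + 1) / 2 = k * (k + 1) / 2 + j * (j + 1) / 2 + k * j := by
  obtain ⟨s, hs⟩ := Nat.even_mul_succ_self k
  obtain ⟨t, ht⟩ := Nat.even_mul_succ_self j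
  have : (k + j) * (k + j + 1) = k * (k + 1) + j * (j + 1) + 2 * (k * j) := by ring
  omega

lemma mul_three_mul_add_one_div_two (k : ℕ) :
    k * (3 * k + 1) / 2 = k * (k + 1) / 2 + k * k := by
  have : k * (3 * k + 1) = k * (k + 1) + 2 * (k * k) := by ring
  omega

namespace PowerSeries

lemma eq_of_forall_X_pow_dvd_sub {R : Type*} [Ring R] {f g : R⟦X⟧}
    (h : ∀ d, X ^ (d + 1) ∣ f - g) : f = g := by
  ext d
  simpa [sub_eq_zero] using X_pow_dvd_iff.mp (h d) d d.lt_succ_self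

lemma isUnit_one_sub_X_pow_succ {R : Type*} [CommRing R] (n : ℕ) :
    IsUnit (1 - X ^ (n + 1) : R⟦X⟧) := by
  simp [isUnit_iff_constantCoeff]

end PowerSeries

open PowerSeries

lemma coeff_seriesSum (f : ℕ → ℤ⟦X⟧) (d : ℕ) :
    coeff d (SeriesSum f) = ∑ k ∈ range (d + 1), coeff d (f k) :=
  coeff_mk _ _

lemma X_pow_dvd_seriesSum {f : ℕ → ℤ⟦X⟧} {N : ℕ} (hf : ∀ k, X ^ N ∣ f k) :
    X ^ N ∣ SeriesSum f :=
  X_pow_dvd_iff.mpr fun m hm => by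
    simp [coeff_seriesSum, fun k => X_pow_dvd_iff.mp (hf k) m hm]

lemma X_pow_dvd_seriesSum_sub_sum {f : ℕ → ℤ⟦X⟧} (hf : ∀ k, X ^ k ∣ f k) (D : ℕ) :
    X ^ (D + 1) ∣ SeriesSum f - ∑ k ∈ range (D + 1), f k := by
  refine X_pow_dvd_iff.mpr fun m hm => ?_
  rw [map_sub, coeff_seriesSum, map_sum, sub_eq_zero]
  refine sum_subset (range_subset_range.mpr (by omega)) fun k hk hmk => ?_
  exact X_pow_dvd_iff.mp (hf k) m (by simp at hk hmk; omega)

lemma mul_seriesSum (A : ℤ⟦X⟧) {f : ℕ → ℤ⟦X⟧} (hf : ∀ k, X ^ k ∣ f k) :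
    A * SeriesSum f = SeriesSum fun k => A * f k := by
  refine eq_of_forall_X_pow_dvd_sub fun d => ?_
  have hAf : ∀ k, X ^ k ∣ A * f k := fun k => (hf k).mul_left A
  have := dvd_sub ((X_pow_dvd_seriesSum_sub_sum hf d).mul_left A)
    (X_pow_dvd_seriesSum_sub_sum hAf d)
  rwa [mul_sub, mul_sum, sub_sub_sub_cancel_right] at this

lemma seriesSum_sub (f g : ℕ → ℤ⟦X⟧) :
    SeriesSum (f - g) = SeriesSum f - SeriesSum g := by
  ext d
  simp [coeff_seriesSum, sum_sub_distrib]

lemma seriesSum_eq_add_seriesSum_succ {f : ℕ → ℤ⟦X⟧} (hf : ∀ k, X ^ k ∣ f k) :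
    SeriesSum f = f 0 + SeriesSum fun k => f (k + 1) := by
  ext d
  rw [map_add, coeff_seriesSum, coeff_seriesSum, sum_range_succ', sum_range_succ,
    X_pow_dvd_iff.mp (hf (d + 1)) d d.lt_succ_self, add_zero, add_comm]

lemma seriesSum_seriesSum_eq_antidiagonal {u : ℕ → ℕ → ℤ⟦X⟧}
    (hu : ∀ k j, X ^ (k + j) ∣ u k j) :
    SeriesSum (fun k => SeriesSum (u k)) =
      SeriesSum fun n => ∑ p ∈ antidiagonal n, u p.1 p.2 := by
  ext d
  simp only [coeff_seriesSum, map_sum, Nat.sum_antidiagonal_eq_sum_range_succ_mk,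
    Nat.succ_eq_add_one]
  rw [sum_range_diag_flip (d + 1) fun k j => coeff d (u k j)]
  refine sum_congr rfl fun k hk =>
    (sum_subset (range_subset_range.mpr (by omega)) fun j hj hkj => ?_).symm
  exact X_pow_dvd_iff.mp (hu k j) d (by simp at hj hkj; omega)

lemma qPoch_zero : qPoch 0 = 1 := prod_range_zero _

lemma qPoch_succ (n : ℕ) : qPoch (n + 1) = qPoch n * (1 - X ^ (n + 1)) :=
  prod_range_succ _ _

lemma isUnit_qPoch (n : ℕ) : IsUnit (qPoch n) := by
  induction n with
  | zero => simp [qPoch_zero]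
  | succ n ih => simpa [qPoch_succ] using ih.mul (isUnit_one_sub_X_pow_succ n)

lemma X_pow_succ_dvd_qPoch_sub {m N : ℕ} (h : m ≤ N) : X ^ (m + 1) ∣ qPoch N - qPoch m := by
  induction N, h using Nat.le_induction with
  | base => simp
  | succ N hmN ih =>
    rw [qPoch_succ, mul_one_sub, sub_right_comm]
    exact dvd_sub ih ((pow_dvd_pow X (by omega)).mul_left _)

lemma X_pow_succ_dvd_qPochInf_sub_qPoch (N : ℕ) : X ^ (N + 1) ∣ qPochInf - qPoch N :=
  X_pow_dvd_iff.mpr fun m hm => by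
    have := X_pow_dvd_iff.mp (X_pow_succ_dvd_qPoch_sub (by omega : m ≤ N)) m m.lt_succ_self
    rw [map_sub, sub_eq_zero] at this
    rw [map_sub, qPochInf, coeff_mk, sub_eq_zero, this]

def qPochInv (n : ℕ) : ℤ⟦X⟧ := Ring.inverse (qPoch n)

lemma inverse_qPoch (n : ℕ) : Ring.inverse (qPoch n) = qPochInv n := rfl

lemma qPoch_mul_qPochInv (n : ℕ) : qPoch n * qPochInv n = 1 :=
  Ring.mul_inverse_cancel _ (isUnit_qPoch n)

lemma qPochInv_zero : qPochInv 0 = 1 := by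
  rw [qPochInv, qPoch_zero, Ring.inverse_one]

lemma one_sub_X_pow_mul_qPochInv_succ (n : ℕ) :
    (1 - X ^ (n + 1)) * qPochInv (n + 1) = qPochInv n := by
  rw [qPochInv, qPoch_succ, Ring.mul_inverse_rev, ← mul_assoc,
    Ring.mul_inverse_cancel _ (isUnit_one_sub_X_pow_succ n), one_mul, qPochInv]

def eulerTerm (m j : ℕ) : ℤ⟦X⟧ := (-1) ^ j * X ^ (j * (j + 1) / 2 + m * j) * qPochInv j

def eulerSeries (m : ℕ) : ℤ⟦X⟧ := SeriesSum (eulerTerm m)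

lemma X_pow_dvd_eulerTerm (m j : ℕ) : X ^ (j * (j + 1) / 2 + m * j) ∣ eulerTerm m j :=
  ⟨(-1) ^ j * qPochInv j, by rw [eulerTerm]; ring⟩

lemma X_pow_index_dvd_eulerTerm (m j : ℕ) : X ^ j ∣ eulerTerm m j :=
  (pow_dvd_pow X (le_mul_succ_div_two j |>.trans (Nat.le_add_right _ _))).trans
    (X_pow_dvd_eulerTerm m j)

lemma eulerTerm_succ_sub (m j : ℕ) :
    eulerTerm m (j + 1) - eulerTerm (m + 1) (j + 1) = -(X ^ (m + 1) * eulerTerm (m + 1) j) := by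
  have hexp : (j + 1) * (j + 1 + 1) / 2 + m * (j + 1) =
      m + 1 + (j * (j + 1) / 2 + (m + 1) * j) := by
    rw [add_mul_add_succ_div_two]; ring
  calc eulerTerm m (j + 1) - eulerTerm (m + 1) (j + 1)
      = (-1) ^ (j + 1) * X ^ ((j + 1) * (j + 1 + 1) / 2 + m * (j + 1)) *
          ((1 - X ^ (j + 1)) * qPochInv (j + 1)) := by
        simp only [eulerTerm]; rw [show (m + 1) * (j + 1) = m * (j + 1) + (j + 1) by ring]; ring
    _ = -(X ^ (m + 1) * eulerTerm (m + 1) j) := by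
        rw [one_sub_X_pow_mul_qPochInv_succ, hexp, eulerTerm]; ring

lemma eulerSeries_eq_one_sub_X_pow_mul (m : ℕ) :
    eulerSeries m = (1 - X ^ (m + 1)) * eulerSeries (m + 1) := by
  have hdiff : eulerSeries m - eulerSeries (m + 1) = -(X ^ (m + 1) * eulerSeries (m + 1)) := by
    rw [eulerSeries, eulerSeries, ← seriesSum_sub,
      seriesSum_eq_add_seriesSum_succ (f := eulerTerm m - eulerTerm (m + 1))
        fun j => dvd_sub (X_pow_index_dvd_eulerTerm m j) (X_pow_index_dvd_eulerTerm (m + 1) j),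
      neg_mul_eq_neg_mul, mul_seriesSum _ (X_pow_index_dvd_eulerTerm (m + 1))]
    simp only [Pi.sub_apply, eulerTerm_succ_sub, neg_mul]
    simp [eulerTerm, qPochInv_zero]
  linear_combination hdiff

lemma qPoch_mul_eulerSeries (m : ℕ) : qPoch m * eulerSeries m = eulerSeries 0 := by
  induction m with
  | zero => rw [qPoch_zero, one_mul]
  | succ m ih => rw [← ih, eulerSeries_eq_one_sub_X_pow_mul m, qPoch_succ, mul_assoc]

lemma X_pow_succ_dvd_eulerSeries_sub_one (m : ℕ) : X ^ (m + 1) ∣ eulerSeries m - 1 := by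
  have hconst : eulerTerm m 0 = 1 := by simp [eulerTerm, qPochInv_zero]
  rw [eulerSeries, seriesSum_eq_add_seriesSum_succ (X_pow_index_dvd_eulerTerm m), hconst,
    add_sub_cancel_left]
  refine X_pow_dvd_seriesSum fun j => ?_
  refine (pow_dvd_pow X ?_).trans (X_pow_dvd_eulerTerm m (j + 1))
  have := le_mul_succ_div_two (j + 1)
  nlinarith

lemma eulerSeries_zero : eulerSeries 0 = qPochInf := by
  refine eq_of_forall_X_pow_dvd_sub fun d => ?_
  have := dvd_sub ((X_pow_succ_dvd_eulerSeries_sub_one d).mul_left (qPoch d))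
    (X_pow_succ_dvd_qPochInf_sub_qPoch d)
  rwa [mul_sub, mul_one, qPoch_mul_eulerSeries, sub_sub_sub_cancel_right] at this

lemma qPochInf_mul_qPochInv (m : ℕ) : qPochInf * qPochInv m = eulerSeries m := by
  rw [← eulerSeries_zero, ← qPoch_mul_eulerSeries m, mul_right_comm, qPoch_mul_qPochInv,
    one_mul]

def durfeeTerm (a i j : ℕ) : ℤ⟦X⟧ :=
  X ^ (i * i + a * i) * (qPochInv i * qPochInv (i + a) * qPochInv j)

lemma one_sub_X_pow_mul_durfeeTerm_succ_right (a i j : ℕ) :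
    (1 - X ^ (j + 1)) * durfeeTerm a i (j + 1) = durfeeTerm a i j := by
  rw [durfeeTerm, durfeeTerm, ← one_sub_X_pow_mul_qPochInv_succ j]
  ring

lemma X_pow_mul_one_sub_X_pow_mul_durfeeTerm_succ_left (a i j : ℕ) :
    X ^ j * (1 - X ^ (i + 1)) * durfeeTerm a (i + 1) j =
      X ^ (i + j + 1 + a) * durfeeTerm (a + 1) i j := by
  have hexp : j + ((i + 1) * (i + 1) + a * (i + 1)) = i + j + 1 + a + (i * i + (a + 1) * i) := by
    ring
  calc X ^ j * (1 - X ^ (i + 1)) * durfeeTerm a (i + 1) j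
      = X ^ (j + ((i + 1) * (i + 1) + a * (i + 1))) *
          ((1 - X ^ (i + 1)) * qPochInv (i + 1) * qPochInv (i + 1 + a) * qPochInv j) := by
        rw [durfeeTerm, pow_add]; ring
    _ = X ^ (i + j + 1 + a) * durfeeTerm (a + 1) i j := by
        rw [durfeeTerm, one_sub_X_pow_mul_qPochInv_succ, hexp, pow_add, add_right_comm i 1 a,
          add_assoc i a 1]
        ring

theorem sum_antidiagonal_durfeeTerm (n a : ℕ) :
    ∑ p ∈ antidiagonal n, durfeeTerm a p.1 p.2 = qPochInv n * qPochInv (n + a) := by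
  induction n generalizing a with
  | zero => simp [durfeeTerm, qPochInv_zero]
  | succ n ih =>
    have hsplit : ∀ p : ℕ × ℕ, (1 - X ^ (p.1 + p.2)) * durfeeTerm a p.1 p.2 =
        (1 - X ^ p.2) * durfeeTerm a p.1 p.2 + X ^ p.2 * (1 - X ^ p.1) * durfeeTerm a p.1 p.2 :=
      fun p => by ring
    have hrhs : (1 - X ^ (n + 1)) * (qPochInv (n + 1) * qPochInv (n + 1 + a)) =
        qPochInv n * qPochInv (n + a) +
          X ^ (n + 1 + a) * (qPochInv n * qPochInv (n + (a + 1))) := by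
      rw [← one_sub_X_pow_mul_qPochInv_succ (n + a), ← mul_assoc,
        one_sub_X_pow_mul_qPochInv_succ, add_right_comm, ← add_assoc]
      ring
    apply mul_left_cancel₀ (isUnit_one_sub_X_pow_succ n).ne_zero
    rw [hrhs, mul_sum,
      Nat.sum_antidiagonal_subst (f := fun p m => (1 - X ^ m) * durfeeTerm a p.1 p.2)]
    simp only [hsplit, sum_add_distrib]
    rw [Nat.sum_antidiagonal_succ', Nat.sum_antidiagonal_succ]
    simp only [one_sub_X_pow_mul_durfeeTerm_succ_right,
      X_pow_mul_one_sub_X_pow_mul_durfeeTerm_succ_left, pow_zero, sub_self, zero_mul, mul_zero,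
      zero_add]
    rw [← Nat.sum_antidiagonal_subst
        (f := fun p m => X ^ (m + 1 + a) * durfeeTerm (a + 1) p.1 p.2), ← mul_sum, ih, ih]

lemma qPochInf_mul_lhs_summand (a b k : ℕ) :
    qPochInf * ((-1) ^ k * X ^ (k * (3 * k + 1) / 2 + (a + b) * k) *
        Ring.inverse (qPoch k * qPoch (k + a) * qPoch (k + b))) =
      SeriesSum fun j => (-1) ^ (k + j) * X ^ ((k + j) * (k + j + 1) / 2 + b * (k + j)) *
        durfeeTerm a k j := by
  have hexp : ∀ j,
      (X : ℤ⟦X⟧) ^ ((k + j) * (k + j + 1) / 2 + b * (k + j)) * X ^ (k * k + a * k) =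
      X ^ (k * (3 * k + 1) / 2 + (a + b) * k) * X ^ (j * (j + 1) / 2 + (k + b) * j) := fun j => by
    rw [← pow_add, ← pow_add, mul_three_mul_add_one_div_two, add_mul_add_succ_div_two]
    ring_nf
  simp only [Ring.mul_inverse_rev, inverse_qPoch]
  calc _ = (-1) ^ k * X ^ (k * (3 * k + 1) / 2 + (a + b) * k) * (qPochInv k * qPochInv (k + a)) *
        (qPochInf * qPochInv (k + b)) := by ring
    _ = _ := by
      rw [qPochInf_mul_qPochInv, eulerSeries, mul_seriesSum _ (X_pow_index_dvd_eulerTerm _)]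
      congr 1; funext j
      rw [eulerTerm, durfeeTerm]
      linear_combination (-(-1) ^ (k + j) * qPochInv k * qPochInv (k + a) * qPochInv j) * hexp j

theorem stmt1 (a b : ℕ) :
    qPochInf *
      SeriesSum (fun k => (-1 : PowerSeries ℤ) ^ k *
        X ^ (k * (3 * k + 1) / 2 + (a + b) * k) *
        Ring.inverse (qPoch k * qPoch (k + a) * qPoch (k + b)))
    = SeriesSum (fun n => (-1 : PowerSeries ℤ) ^ n *
        X ^ (n * (n + 1) / 2 + b * n) *
        Ring.inverse (qPoch n * qPoch (n + a))) := by
  have hleft : ∀ k, X ^ k ∣ (-1 : ℤ⟦X⟧) ^ k * X ^ (k * (3 * k + 1) / 2 + (a + b) * k) *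
      Ring.inverse (qPoch k * qPoch (k + a) * qPoch (k + b)) := fun k => by
    refine ((pow_dvd_pow X ?_).trans (dvd_mul_left _ _)).mul_right _
    rw [mul_three_mul_add_one_div_two]
    nlinarith [le_mul_succ_div_two k]
  have hdouble : ∀ k j, X ^ (k + j) ∣ (-1 : ℤ⟦X⟧) ^ (k + j) *
      X ^ ((k + j) * (k + j + 1) / 2 + b * (k + j)) * durfeeTerm a k j := fun k j =>
    ((pow_dvd_pow X ((le_mul_succ_div_two _).trans (Nat.le_add_right _ _))).trans
      (dvd_mul_left _ _)).mul_right _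
  rw [mul_seriesSum _ hleft]
  simp only [qPochInf_mul_lhs_summand]
  rw [seriesSum_seriesSum_eq_antidiagonal hdouble]
  congr 1; funext n
  rw [← Nat.sum_antidiagonal_subst (f := fun p m =>
      (-1 : ℤ⟦X⟧) ^ m * X ^ (m * (m + 1) / 2 + b * m) * durfeeTerm a p.1 p.2),
    ← mul_sum, sum_antidiagonal_durfeeTerm, Ring.mul_inverse_rev, inverse_qPoch, inverse_qPoch,
    mul_comm (qPochInv _)]
end
end

section
/- The series J^FKB satisfies the translation property: for all integers a, b, c and s, one has J^FKB(a,b,c) = (−t)^s · J^FKB(a+s, b+s, c+s) in ℤ((t)). -/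
/-!
STATEMENT 2 (Translation property of J^FKB).  Work in ℤ((t))
(`LaurentSeries ℤ`), with `q = t²`.  The Frohman–Kania-Bartoszynska series
`J^FKB(a,b,c)` is defined exactly as in the context; it is a monomial in
`t` (a `HahnSeries.single`) times a t-adic sum of power series in `t`
(infinite t-adic sums are encoded coefficientwise, see `SeriesSum`).

The statement: for all integers `a b c s`,
`J^FKB(a,b,c) = (−t)^s · J^FKB(a+s, b+s, c+s)` in ℤ((t)), where
`(−t)^s = (−1)^s t^s = HahnSeries.single s ((−1)^{|s|})`.
-/

noncomputable section
open PowerSeries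

/-- `(q;q)_n = ∏_{j=1}^n (1 − q^j)` with `q = t²`, as a power series in `t`. -/
def qPt (n : ℕ) : PowerSeries ℤ :=
  ∏ j ∈ Finset.range n, (1 - (X : PowerSeries ℤ) ^ (2 * (j + 1)))

/-- `(q;q)_k` for an integer index `k`, with the convention `(q;q)_k = ∞` for
`k < 0` (the value `0` here, so that `Ring.inverse` of it is `0 = 1/∞`). -/
def qPtZ (k : ℤ) : PowerSeries ℤ := if 0 ≤ k then qPt k.toNat else 0

/-- `(q;q)_∞`, the t-adic limit of `(q;q)_n`: its `d`-th coefficient is the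
stable value `coeff d ((q;q)_d)`. -/
def qPtInf : PowerSeries ℤ := PowerSeries.mk fun d => coeff d (qPt d)

/-- The Dimofte–Gaiotto–Gukov tetrahedron index
`I_Δ(m,e) = Σ_{n ≥ max(0,−e)} (−1)^n t^{n(n+1) − (2n+e)m} / ((q;q)_n (q;q)_{n+e})
          ∈ ℤ((t))`.
The t-exponent of the `n`-th term is `n(n+1) − (2n+e)m = ((n−m)² + n) − (m² + em)`;
factoring out the monomial `t^{−(m²+em)}` leaves a t-adic sum of power series
in `t` (the `n`-th having t-order `(n−m)² + n ≥ n`), which is mapped to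
`ℤ((t)) = LaurentSeries ℤ` by `HahnSeries.ofPowerSeries`.  The terms with
`n + e < 0` vanish, by the `1/(q;q)_{neg} = 0` convention built into `qPtZ`. -/
def Idelta (m e : ℤ) : LaurentSeries ℤ :=
  HahnSeries.single (-(m ^ 2 + e * m)) 1 *
    HahnSeries.ofPowerSeries ℤ ℤ
      (SeriesSum fun n => (-1 : PowerSeries ℤ) ^ n *
        X ^ ((((n : ℤ) - m) ^ 2 + (n : ℤ)).toNat) *
        Ring.inverse (qPt n * qPtZ ((n : ℤ) + e)))

/-- The Frohman–Kania-Bartoszynska series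
`J^FKB(a,b,c) = (q;q)_∞ · Σ_{n ≥ −min(a,b,c)} (−1)^n
   t^{n(3n+1) + 2n(a+b+c) + ab+bc+ca} / ((q;q)_{n+a} (q;q)_{n+b} (q;q)_{n+c})
   ∈ ℤ((t))`.
Writing `μ = min(a,b,c)`, `sᵢ = a − μ, b − μ, c − μ ≥ 0`, `σ = s₁+s₂+s₃` and
`π = s₁s₂+s₂s₃+s₃s₁`, the summation index is `n = k − μ` with `k ∈ ℕ`, and the
t-exponent of the `n`-th term is
`n(3n+1) + 2n(a+b+c) + ab+bc+ca = (k(3k+1) + 2kσ) + (π − μ)`, while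
`(−1)^n = (−1)^k (−1)^μ`; factoring out the monomial `(−1)^μ t^{π−μ}` leaves a
t-adic sum of power series in `t` (the `k`-th having t-order
`k(3k+1) + 2kσ ≥ k`), mapped into `ℤ((t))` by `HahnSeries.ofPowerSeries`. -/
def Jfkb (a b c : ℤ) : LaurentSeries ℤ :=
  let μ : ℤ := min a (min b c)
  let s₁ : ℕ := (a - μ).toNat
  let s₂ : ℕ := (b - μ).toNat
  let s₃ : ℕ := (c - μ).toNat
  HahnSeries.single (((s₁ * s₂ + s₂ * s₃ + s₃ * s₁ : ℕ) : ℤ) - μ)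
      ((-1 : ℤ) ^ μ.natAbs) *
    HahnSeries.ofPowerSeries ℤ ℤ
      (qPtInf * SeriesSum fun k => (-1 : PowerSeries ℤ) ^ k *
        X ^ (k * (3 * k + 1) + 2 * k * (s₁ + s₂ + s₃)) *
        Ring.inverse (qPt (k + s₁) * qPt (k + s₂) * qPt (k + s₃)))

/-!
Shifting `a, b, c` by `s` shifts `μ = min(a,b,c)` by `s` and leaves the gaps `sᵢ` unchanged, so
the power-series factor of `J^FKB` is translation invariant; only the monomial prefactor
`(−1)^μ t^{π−μ}` changes, by exactly `(−t)^{−s}`.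
-/

theorem neg_one_pow_natAbs_add {R : Type*} [Monoid R] [HasDistribNeg R] (m n : ℤ) :
    (-1 : R) ^ (m + n).natAbs = (-1) ^ m.natAbs * (-1) ^ n.natAbs := by
  rw [← pow_add]
  exact neg_one_pow_congr (by simp [Int.natAbs_even, Nat.even_add, Int.even_add])

theorem stmt2 (a b c s : ℤ) :
    Jfkb a b c
      = HahnSeries.single s ((-1 : ℤ) ^ s.natAbs) * Jfkb (a + s) (b + s) (c + s) := by
  have hμ : min (a + s) (min (b + s) (c + s)) = min a (min b c) + s := by
    rw [min_add_add_right, min_add_add_right]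
  simp only [Jfkb, hμ, add_sub_add_right_eq_sub]
  set μ := min a (min b c)
  have hexp (e : ℤ) : e - μ = s + (e - (μ + s)) := by ring
  have hsign : (-1 : ℤ) ^ μ.natAbs = (-1) ^ s.natAbs * (-1) ^ (μ + s).natAbs := by
    rw [add_comm μ, neg_one_pow_natAbs_add, ← mul_assoc, ← pow_add,
      Even.neg_one_pow ⟨s.natAbs, rfl⟩, one_mul]
  rw [← mul_assoc, HahnSeries.single_mul_single, ← hexp, ← hsign]
end
end

section
/- Unique minimal-degree term in the quantum 6j-symbol sum: let (a,b,e), (a,c,f), (c,d,e), (b,d,f) be admissible triples of natural numbers (i.e., each triple has even sum and satisfies the triangle inequalities), and set S₁ = (a+d+b+c)/2, S₂ = (a+d+e+f)/2, S₃ = (b+c+e+f)/2, T₁ = (a+b+e)/2, T₂ = (a+c+f)/2, T₃ = (c+d+e)/2, T₄ = (b+d+f)/2, T⁺ = max{T₁,T₂,T₃,T₄}, S* = min{S₁,S₂,S₃}. Define the integer-valued function P(k) = −k² + Σ_{i=1}^{3} (S_i − k)² + Σ_{j=1}^{4} (k − T_j)² − 2k (equal to four times the q-degree of the k-th summand of the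 6j-symbol). Then P is strictly decreasing on the interval [T⁺, S*]: for all integers k, k' with T⁺ ≤ k < k' ≤ S*, one has P(k') < P(k). In particular the summand with k = S* has strictly minimal q-degree. -/
/-!
STATEMENT 7 (Unique minimal-degree term in the quantum 6j-symbol sum).
Let `(a,b,e)`, `(a,c,f)`, `(c,d,e)`, `(b,d,f)` be admissible triples of
naturals (even sum and triangle inequalities), and set
`S₁ = (a+d+b+c)/2, S₂ = (a+d+e+f)/2, S₃ = (b+c+e+f)/2`,
`T₁ = (a+b+e)/2, T₂ = (a+c+f)/2, T₃ = (c+d+e)/2, T₄ = (b+d+f)/2`,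
`T⁺ = max Tⱼ`, `S* = min Sᵢ` (all divisions are exact by the parity
hypotheses: e.g. `a+d+b+c` is even since `a+b+e` and `c+d+e` are).
With `P(k) = −k² + Σᵢ (Sᵢ−k)² + Σⱼ (k−Tⱼ)² − 2k` (an integer-valued function
of `k ∈ ℤ`, four times the q-degree of the k-th summand of the 6j-symbol),
`P` is strictly decreasing on `[T⁺, S*]`; in particular `P(S*) < P(k)` for
all `T⁺ ≤ k < S*`, i.e. the summand with `k = S*` has strictly minimal
q-degree.
-/

/-- The function `P(k) = −k² + Σ_{i=1}^3 (Sᵢ−k)² + Σ_{j=1}^4 (k−Tⱼ)² − 2k`. -/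
def Pdeg (S₁ S₂ S₃ T₁ T₂ T₃ T₄ : ℕ) (k : ℤ) : ℤ :=
  -k ^ 2 + ((S₁ : ℤ) - k) ^ 2 + ((S₂ : ℤ) - k) ^ 2 + ((S₃ : ℤ) - k) ^ 2 +
    (k - (T₁ : ℤ)) ^ 2 + (k - (T₂ : ℤ)) ^ 2 + (k - (T₃ : ℤ)) ^ 2 + (k - (T₄ : ℤ)) ^ 2 -
    2 * k

lemma pdeg_key (S₁ S₂ S₃ T₁ T₂ T₃ T₄ : ℕ)
    (hsum : (S₁ : ℤ) + S₂ + S₃ = (T₁ : ℤ) + T₂ + T₃ + T₄)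
    (k k' : ℤ) (hkk : k < k') (h1 : k' ≤ (S₁ : ℤ)) (h2 : k' ≤ (S₂ : ℤ))
    (h3 : k' ≤ (S₃ : ℤ)) :
    Pdeg S₁ S₂ S₃ T₁ T₂ T₃ T₄ k' < Pdeg S₁ S₂ S₃ T₁ T₂ T₃ T₄ k := by
  have h5 : 0 < (k' - k) * ((4 * ((S₁ : ℤ) + S₂ + S₃) + 2) - 6 * (k + k')) :=
    mul_pos (by linarith) (by linarith)
  have heq : Pdeg S₁ S₂ S₃ T₁ T₂ T₃ T₄ k - Pdeg S₁ S₂ S₃ T₁ T₂ T₃ T₄ k' =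
      (k' - k) * ((4 * ((S₁ : ℤ) + S₂ + S₃) + 2) - 6 * (k + k')) := by
    unfold Pdeg
    linear_combination (2 * (k - k')) * hsum
  linarith

theorem stmt7 (a b c d e f : ℕ)
    (h1 : Even (a + b + e)) (h2 : Even (a + c + f))
    (h3 : Even (c + d + e)) (h4 : Even (b + d + f))
    (h1a : a ≤ b + e) (h1b : b ≤ a + e) (h1c : e ≤ a + b)
    (h2a : a ≤ c + f) (h2b : c ≤ a + f) (h2c : f ≤ a + c)
    (h3a : c ≤ d + e) (h3b : d ≤ c + e) (h3c : e ≤ c + d)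
    (h4a : b ≤ d + f) (h4b : d ≤ b + f) (h4c : f ≤ b + d) :
    (∀ k k' : ℤ,
      ((max (max ((a + b + e) / 2) ((a + c + f) / 2))
            (max ((c + d + e) / 2) ((b + d + f) / 2)) : ℕ) : ℤ) ≤ k →
      k < k' →
      k' ≤ ((min (min ((a + d + b + c) / 2) ((a + d + e + f) / 2))
              ((b + c + e + f) / 2) : ℕ) : ℤ) →
      Pdeg ((a + d + b + c) / 2) ((a + d + e + f) / 2) ((b + c + e + f) / 2)
          ((a + b + e) / 2) ((a + c + f) / 2) ((c + d + e) / 2) ((b + d + f) / 2) k'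
        < Pdeg ((a + d + b + c) / 2) ((a + d + e + f) / 2) ((b + c + e + f) / 2)
          ((a + b + e) / 2) ((a + c + f) / 2) ((c + d + e) / 2) ((b + d + f) / 2) k)
    ∧ (∀ k : ℤ,
      ((max (max ((a + b + e) / 2) ((a + c + f) / 2))
            (max ((c + d + e) / 2) ((b + d + f) / 2)) : ℕ) : ℤ) ≤ k →
      k < ((min (min ((a + d + b + c) / 2) ((a + d + e + f) / 2))
              ((b + c + e + f) / 2) : ℕ) : ℤ) →
      Pdeg ((a + d + b + c) / 2) ((a + d + e + f) / 2) ((b + c + e + f) / 2)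
          ((a + b + e) / 2) ((a + c + f) / 2) ((c + d + e) / 2) ((b + d + f) / 2)
          ((min (min ((a + d + b + c) / 2) ((a + d + e + f) / 2))
              ((b + c + e + f) / 2) : ℕ) : ℤ)
        < Pdeg ((a + d + b + c) / 2) ((a + d + e + f) / 2) ((b + c + e + f) / 2)
          ((a + b + e) / 2) ((a + c + f) / 2) ((c + d + e) / 2) ((b + d + f) / 2) k) := by
  have e1 := Nat.even_iff.mp h1
  have e2 := Nat.even_iff.mp h2
  have e3 := Nat.even_iff.mp h3
  have e4 := Nat.even_iff.mp h4
  have hsum : (((a + d + b + c) / 2 : ℕ) : ℤ) + ((a + d + e + f) / 2 : ℕ) +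
      ((b + c + e + f) / 2 : ℕ) =
      (((a + b + e) / 2 : ℕ) : ℤ) + ((a + c + f) / 2 : ℕ) + ((c + d + e) / 2 : ℕ) +
      ((b + d + f) / 2 : ℕ) := by
    have : (a + d + b + c) / 2 + (a + d + e + f) / 2 + (b + c + e + f) / 2 =
        (a + b + e) / 2 + (a + c + f) / 2 + (c + d + e) / 2 + (b + d + f) / 2 := by
      omega
    exact_mod_cast congrArg (Nat.cast : ℕ → ℤ) this
  constructor
  · intro k k' _ hkk hk'
    have hm : k' ≤ ((min (min ((a + d + b + c) / 2) ((a + d + e + f) / 2))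
        ((b + c + e + f) / 2) : ℕ) : ℤ) := hk'
    simp only [Nat.cast_min, le_min_iff] at hm
    exact pdeg_key _ _ _ _ _ _ _ hsum k k' hkk hm.1.1 hm.1.2 hm.2
  · intro k _ hk
    refine pdeg_key _ _ _ _ _ _ _ hsum k _ hk ?_ ?_ ?_
    · exact Nat.cast_le.mpr ((min_le_left _ _).trans (min_le_left _ _))
    · exact Nat.cast_le.mpr ((min_le_left _ _).trans (min_le_right _ _))
    · exact Nat.cast_le.mpr (min_le_right _ _)
end
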